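/- arXiv:2407.11889 — 2 statements merged into one kernel-verified Lean document; each statement's English description precedes it below -/
import Mathlib

section
/- In the (p,φ)-resampling model, the limiting approvalwise vector is av(p,φ) with pm entries equal to (1−φ)+φp and (1−p)m entries equal to φp, and for p,p',φ,φ' ∈ [0,1] with pm, p'm integers: the approvalwise (ℓ1) distance between av(p,φ) and av(p',φ) is m·|p−p'|, and between av(p,φ) and av(p,φ') is 2mp(1−p)·|φ−φ'|. In particular, the distance between p-IC = av(p,1) and p-ID = av(p,0) is 2mp(1−p), and the distance between the empty vector av(0,0) and the full vector av(1,0) is m, which is the maximum possible approvalwise distance between any two vectors with entries in [0,1]. -/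
open Finset

/-- The limiting approvalwise vector of the (p,φ)-resampling model with m
candidates, where a = pm is the (integer) number of candidates approved in the
central ballot: a entries equal to (1−φ)+φp followed by m−a entries equal to
φp (sorted nonincreasingly). -/
def av (m : ℕ) (p φ : ℝ) (a : ℕ) : Fin m → ℝ :=
  fun i => if (i : ℕ) < a then (1 - φ) + φ * p else φ * p

lemma sum_ite_const (m a : ℕ) (ham : a ≤ m) (c d : ℝ) :
    ∑ i : Fin m, (if (i : ℕ) < a then c else d) = a * c + ((m : ℝ) - a) * d := by
  rw [Fin.sum_univ_eq_sum_range (fun i => if i < a then c else d)]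
  rw [Finset.sum_ite]
  have h1 : (Finset.range m).filter (fun i => i < a) = Finset.range a := by
    ext x; simp; omega
  have h2 : (Finset.range m).filter (fun i => ¬ i < a) = Finset.Ico a m := by
    ext x; simp; omega
  rw [h1, h2]
  simp only [Finset.sum_const, Finset.card_range, Nat.card_Ico, nsmul_eq_mul]
  rw [Nat.cast_sub ham]

lemma sum_ite2 (m a a' : ℕ) (haa : a ≤ a') (ham : a' ≤ m) (c e d : ℝ) :
    ∑ i : Fin m, (if (i : ℕ) < a then c else if (i : ℕ) < a' then e else d)
      = a * c + ((a' : ℝ) - a) * e + ((m : ℝ) - a') * d := by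
  have key : ∀ i : Fin m, (if (i : ℕ) < a then c else if (i : ℕ) < a' then e else d)
      = (if (i : ℕ) < a then c - e else 0) + (if (i : ℕ) < a' then e else d) := by
    intro i
    by_cases h1 : (i : ℕ) < a
    · have h2 : (i : ℕ) < a' := lt_of_lt_of_le h1 haa
      simp [h1, h2]
    · simp [h1]
  rw [Finset.sum_congr rfl (fun i _ => key i), Finset.sum_add_distrib,
    sum_ite_const m a (haa.trans ham) (c - e) 0, sum_ite_const m a' ham e d]
  ring

lemma lem1 (m : ℕ) (p p' φ : ℝ) (a a' : ℕ)
    (hp : p ∈ Set.Icc (0 : ℝ) 1) (hp' : p' ∈ Set.Icc (0 : ℝ) 1)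
    (hφ : φ ∈ Set.Icc (0 : ℝ) 1)
    (ha : (a : ℝ) = p * m) (ha' : (a' : ℝ) = p' * m) (haa : a ≤ a') :
    ∑ i, |av m p φ a i - av m p' φ a' i| = m * |p - p'| := by
  rcases Nat.eq_zero_or_pos m with hm | hm
  · subst hm; simp
  have hmR : (0 : ℝ) < m := by exact_mod_cast hm
  have hpp : p ≤ p' := by
    have : (a : ℝ) ≤ a' := by exact_mod_cast haa
    rw [ha, ha'] at this
    exact le_of_mul_le_mul_right this hmR
  have ham : a' ≤ m := by
    have : (a' : ℝ) ≤ m := by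
      rw [ha']; nlinarith [hp'.2]
    exact_mod_cast this
  have key : ∀ i : Fin m, |av m p φ a i - av m p' φ a' i|
      = if (i : ℕ) < a then φ * (p' - p) else
          if (i : ℕ) < a' then (1 - φ) + φ * (p' - p) else φ * (p' - p) := by
    intro i
    unfold av
    have hnn : 0 ≤ φ * (p' - p) := mul_nonneg hφ.1 (by linarith)
    by_cases h1 : (i : ℕ) < a
    · have h2 : (i : ℕ) < a' := lt_of_lt_of_le h1 haa
      simp only [h1, h2, if_true]
      rw [show (1 - φ) + φ * p - ((1 - φ) + φ * p') = -(φ * (p' - p)) by ring,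
        abs_neg, abs_of_nonneg hnn]
    · by_cases h2 : (i : ℕ) < a'
      · simp only [h1, h2, if_true, if_false]
        rw [show φ * p - ((1 - φ) + φ * p') = -((1 - φ) + φ * (p' - p)) by ring,
          abs_neg, abs_of_nonneg (by nlinarith [hφ.2])]
      · simp only [h1, h2, if_false]
        rw [show φ * p - φ * p' = -(φ * (p' - p)) by ring, abs_neg,
          abs_of_nonneg hnn]
  rw [Finset.sum_congr rfl (fun i _ => key i), sum_ite2 m a a' haa ham,
    abs_sub_comm, abs_of_nonneg (by linarith), ha, ha']
  ring

lemma lem2 (m : ℕ) (p φ φ' : ℝ) (a : ℕ)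
    (hp : p ∈ Set.Icc (0 : ℝ) 1)
    (hφ : φ ∈ Set.Icc (0 : ℝ) 1) (hφ' : φ' ∈ Set.Icc (0 : ℝ) 1)
    (ha : (a : ℝ) = p * m) :
    ∑ i, |av m p φ a i - av m p φ' a i| = 2 * m * p * (1 - p) * |φ - φ'| := by
  have ham : a ≤ m := by
    have : (a : ℝ) ≤ m := by rw [ha]; nlinarith [hp.2, Nat.cast_nonneg (α := ℝ) m]
    exact_mod_cast this
  have key : ∀ i : Fin m, |av m p φ a i - av m p φ' a i|
      = if (i : ℕ) < a then (1 - p) * |φ - φ'| else p * |φ - φ'| := by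
    intro i
    unfold av
    by_cases h1 : (i : ℕ) < a
    · simp only [h1, if_true]
      rw [show (1 - φ) + φ * p - ((1 - φ') + φ' * p) = (1 - p) * (φ' - φ) by ring,
        abs_mul, abs_of_nonneg (by linarith [hp.2]), abs_sub_comm φ' φ]
    · simp only [h1, if_false]
      rw [show φ * p - φ' * p = p * (φ - φ') by ring, abs_mul,
        abs_of_nonneg hp.1]
  rw [Finset.sum_congr rfl (fun i _ => key i), sum_ite_const m a ham, ha]
  ring

/-- Approvalwise (ℓ1) distances between limiting resampling vectors:
d(av(p,φ), av(p',φ)) = m·|p−p'|; d(av(p,φ), av(p,φ')) = 2mp(1−p)·|φ−φ'|;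
in particular d(p-IC, p-ID) = 2mp(1−p), the distance between the empty and full
vectors is m, and m is the maximum possible approvalwise distance between any
two vectors with entries in [0,1]. -/
theorem stmt17 (m : ℕ) (p p' φ φ' : ℝ) (a a' : ℕ)
    (hp : p ∈ Set.Icc (0 : ℝ) 1) (hp' : p' ∈ Set.Icc (0 : ℝ) 1)
    (hφ : φ ∈ Set.Icc (0 : ℝ) 1) (hφ' : φ' ∈ Set.Icc (0 : ℝ) 1)
    (ha : (a : ℝ) = p * m) (ha' : (a' : ℝ) = p' * m) :
    (∑ i, |av m p φ a i - av m p' φ a' i| = m * |p - p'|) ∧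
    (∑ i, |av m p φ a i - av m p φ' a i| = 2 * m * p * (1 - p) * |φ - φ'|) ∧
    (∑ i, |av m p 1 a i - av m p 0 a i| = 2 * m * p * (1 - p)) ∧
    (∑ i, |av m 0 0 0 i - av m 1 0 m i| = m) ∧
    (∀ x y : Fin m → ℝ, (∀ i, x i ∈ Set.Icc (0 : ℝ) 1) →
      (∀ i, y i ∈ Set.Icc (0 : ℝ) 1) → ∑ i, |x i - y i| ≤ m) := by
  refine ⟨?_, ?_, ?_, ?_, ?_⟩
  · rcases le_total a a' with h | h
    · exact lem1 m p p' φ a a' hp hp' hφ ha ha' h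
    · rw [abs_sub_comm p p', ← lem1 m p' p φ a' a hp' hp hφ ha' ha h]
      exact Finset.sum_congr rfl (fun i _ => abs_sub_comm _ _)
  · exact lem2 m p φ φ' a hp hφ hφ' ha
  · have h := lem2 m p 1 0 a hp (by constructor <;> norm_num)
      (by constructor <;> norm_num) ha
    simpa using h
  · have h := lem1 m 0 1 0 0 m (by constructor <;> norm_num)
      (by constructor <;> norm_num) (by constructor <;> norm_num)
      (by simp) (by simp) (Nat.zero_le m)
    simpa using h
  · intro x y hx hy
    calc ∑ i, |x i - y i| ≤ ∑ _i : Fin m, (1 : ℝ) := by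
          refine Finset.sum_le_sum (fun i _ => ?_)
          have h1 := (hx i).1; have h2 := (hx i).2
          have h3 := (hy i).1; have h4 := (hy i).2
          exact abs_le.2 ⟨by linarith, by linarith⟩
      _ = m := by simp
end

section
/- The swap distance and the Spearman distance between two linear orders u, v over m candidates satisfy d_swap(u,v) ≤ d_Spear(u,v) ≤ 2·d_swap(u,v), where d_Spear(u,v) = Σ_c |pos_v(c) − pos_u(c)| and d_swap(u,v) is the number of pairs of candidates ranked in opposite relative order by u and v. -/
/-!
Counting positions: `u c = #{d | u d < u c}`, and every `d` counted there but not in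
`v c = #{d | v d < v c}` is discordant with `c`. So `|u c - v c|` is at most the number of
discordant pairs containing `c`, and summing over `c` counts each discordant pair twice.

Conversely, a discordant pair with `u a < u b` and `v b < v a` has either `v b ∈ [u a, v a)`,
giving at most `(v a - u a)⁺` pairs for each `a`, or `u a ∈ (v b, u b)`, giving at most
`(u b - v b)⁺` pairs for each `b`; together these are `∑ c, |u c - v c|`.
-/

open Finset

noncomputable section
open scoped Classical

/-- Votes are bijections from candidates to positions. The swap (Kendall tau)
distance counts the pairs of candidates ranked in opposite relative orders by u
and v (each unordered discordant pair is counted once). -/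
def dswap {m : ℕ} (u v : Equiv.Perm (Fin m)) : ℕ :=
  (Finset.univ.filter (fun p : Fin m × Fin m => u p.1 < u p.2 ∧ v p.2 < v p.1)).card

/-- The Spearman footrule distance: total displacement of candidates. -/
def dSpear {m : ℕ} (u v : Equiv.Perm (Fin m)) : ℤ :=
  ∑ c, |((u c : ℕ) : ℤ) - ((v c : ℕ) : ℤ)|

namespace DiaconisGraham

variable {m : ℕ}

lemma card_filter_apply_mem {α β : Type*} [Fintype α] [DecidableEq β] (e : α ≃ β)
    (s : Finset β) : #{x | e x ∈ s} = #s :=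
  card_equiv e fun x => by simp

lemma card_filter_apply_lt {α : Type*} [Fintype α] (e : α ≃ Fin m) (k : Fin m) :
    #{x | e x < k} = k := by
  simpa using card_filter_apply_mem e (Iio k)

lemma card_filter_prod {α β : Type*} [Fintype α] [Fintype β] (r : α → β → Prop)
    [∀ a b, Decidable (r a b)] : #{p : α × β | r p.1 p.2} = ∑ a, #{b | r a b} := by
  simp only [card_filter, ← univ_product_univ, sum_product]

lemma sum_card_filter_comm {α β : Type*} [Fintype α] [Fintype β] (r : α → β → Prop)
    [∀ a b, Decidable (r a b)] : ∑ a, #{b | r a b} = ∑ b, #{a | r a b} :=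
  sum_card_bipartiteAbove_eq_sum_card_bipartiteBelow r

lemma dswap_eq_sum_left (u v : Equiv.Perm (Fin m)) :
    dswap u v = ∑ a, #{b | u a < u b ∧ v b < v a} :=
  card_filter_prod fun a b => u a < u b ∧ v b < v a

lemma dswap_eq_sum_right (u v : Equiv.Perm (Fin m)) :
    dswap u v = ∑ b, #{a | u a < u b ∧ v b < v a} :=
  (dswap_eq_sum_left u v).trans (sum_card_filter_comm _)

lemma dSpear_eq_sum_tsub (u v : Equiv.Perm (Fin m)) :
    dSpear u v = ((∑ c, (((u c : ℕ) - v c) + ((v c : ℕ) - u c)) : ℕ) : ℤ) := by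
  push_cast [dSpear]
  refine sum_congr rfl fun c _ => ?_
  grind

lemma card_filter_le_card_filter_or {α : Type*} [Fintype α] {p q r : α → Prop}
    [DecidablePred p] [DecidablePred q] [DecidablePred r] (h : ∀ x, p x → q x ∨ r x) :
    #{x | p x} ≤ #{x | q x} + #{x | r x} := by
  grw [← card_union_le, ← filter_or]
  exact card_le_card (monotone_filter_right _ fun x _ => h x)

lemma apply_le_apply_add_card (u v : Equiv.Perm (Fin m)) (c : Fin m) :
    (u c : ℕ) ≤ v c + #{d | u d < u c ∧ v c < v d} := by
  rw [← card_filter_apply_lt u, ← card_filter_apply_lt v]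
  refine card_filter_le_card_filter_or fun d hd => ?_
  have hdc : v d ≠ v c := v.injective.ne (by rintro rfl; exact hd.false)
  grind

lemma card_discordant_le (u v : Equiv.Perm (Fin m)) (a : Fin m) :
    #{b | u a < u b ∧ v b < v a} ≤ #{b | u a < u b ∧ v b < u a} + ((v a : ℕ) - u a) := by
  rw [← Fin.card_Ico, ← card_filter_apply_mem v (Ico (u a) (v a))]
  refine card_filter_le_card_filter_or fun b hb => ?_
  grind

lemma dswap_le_sum_tsub (u v : Equiv.Perm (Fin m)) :
    dswap u v ≤ ∑ c, (((u c : ℕ) - v c) + ((v c : ℕ) - u c)) :=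
  calc dswap u v
      ≤ ∑ a, (#{b | u a < u b ∧ v b < u a} + ((v a : ℕ) - u a)) := by
        rw [dswap_eq_sum_left]
        exact sum_le_sum fun a _ => card_discordant_le u v a
    _ = ∑ b, #{a | v b < u a ∧ u a < u b} + ∑ a, ((v a : ℕ) - u a) := by
        rw [sum_add_distrib, sum_card_filter_comm fun a b => u a < u b ∧ v b < u a]
        simp only [and_comm]
    _ ≤ ∑ b, ((u b : ℕ) - v b) + ∑ a, ((v a : ℕ) - u a) := by
        gcongr with b
        have h := card_filter_apply_mem u (Ioo (v b) (u b))
        simp only [mem_Ioo, Fin.card_Ioo] at h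
        omega
    _ = _ := sum_add_distrib.symm

lemma sum_tsub_le_two_mul_dswap (u v : Equiv.Perm (Fin m)) :
    ∑ c, (((u c : ℕ) - v c) + ((v c : ℕ) - u c)) ≤ 2 * dswap u v :=
  calc ∑ c, (((u c : ℕ) - v c) + ((v c : ℕ) - u c))
      ≤ ∑ c, (#{d | u d < u c ∧ v c < v d} + #{d | u c < u d ∧ v d < v c}) := by
        refine sum_le_sum fun c _ => ?_
        have hu := apply_le_apply_add_card u v c
        have hv := apply_le_apply_add_card v u c
        simp only [and_comm] at hv
        omega
    _ = 2 * dswap u v := by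
        rw [sum_add_distrib, ← dswap_eq_sum_right, ← dswap_eq_sum_left, two_mul]

end DiaconisGraham

/-- Diaconis–Graham inequalities: d_swap(u,v) ≤ d_Spear(u,v) ≤ 2·d_swap(u,v). -/
theorem stmt19 {m : ℕ} (u v : Equiv.Perm (Fin m)) :
    (dswap u v : ℤ) ≤ dSpear u v ∧ dSpear u v ≤ 2 * (dswap u v : ℤ) := by
  rw [DiaconisGraham.dSpear_eq_sum_tsub]
  constructor
  · exact_mod_cast DiaconisGraham.dswap_le_sum_tsub u v
  · exact_mod_cast DiaconisGraham.sum_tsub_le_two_mul_dswap u v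

end
end
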